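/- arXiv:1301.2892 — 8 statements merged into one kernel-verified Lean document; each statement's English description precedes it below -/
import Mathlib

section
/- Every endomorphism Ψ of the group G = ℤ^m × F_n (m ≥ 1, n ≥ 1) is of the following form: there exist an m×m integer matrix Q and an n×m integer matrix P such that for all (a,u) ∈ G, Ψ(a,u) = (aQ + ūP, σ(a,u)), where the second coordinate σ(a,u) is given by either (i) σ(a,u) = φ(u) for some (fixed) endomorphism φ of F_n, or (ii) σ(a,u) = w^{a·lᵀ + ū·hᵀ} for some (fixed) element w ∈ F_n with w ≠ 1 and w not a proper power, some l ∈ ℤ^m with l ≠ 0, and some h ∈ ℤ^n. -/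
open Matrix

/-- The abelianization vector (vector of exponent sums of the generators)
of an element of the free group `F_n`. -/
def abVec {n : ℕ} (u : FreeGroup (Fin n)) : Fin n → ℤ :=
  Multiplicative.toAdd ((FreeGroup.lift fun i => Multiplicative.ofAdd (Pi.single i (1 : ℤ))) u)

/-- The free-abelian times free group `G = ℤ^m × F_n`. -/
abbrev GFab (m n : ℕ) := Multiplicative (Fin m → ℤ) × FreeGroup (Fin n)

/-!
The first coordinate of `Ψ` is a homomorphism into `ℤ^m`, hence linear in `(a, ū)`. For the
second coordinate `σ`, the image of `ℤ^m × 1` is central in the image of `σ`. If it is trivial,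
`σ` only depends on `u`. Otherwise it contains some `g ≠ 1`; by Nielsen–Schreier the centralizer
of `g` is free, and since a free group of rank at least two has trivial centre, it is infinite
cyclic, generated by some `w` that is not a proper power. Then `σ` takes values in `⟨w⟩ ≅ ℤ`,
so its exponent is again linear in `(a, ū)`.
-/

namespace FreeGroup

variable {α : Type*}

theorem of_mul_of_ne_of_mul_of {a b : α} (hab : a ≠ b) : of a * of b ≠ of b * of a := by
  classical
  intro h
  have := congrArg (lift fun x => if x = a then Equiv.swap (0 : Fin 3) 1 else Equiv.swap 1 2) h
  simp only [_root_.map_mul, lift_apply_of, ↓reduceIte, hab.symm] at this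
  revert this
  decide

theorem subsingleton_of_forall_commute (h : ∀ x y : FreeGroup α, Commute x y) : Subsingleton α :=
  ⟨fun _ _ => by_contra fun hab => of_mul_of_ne_of_mul_of hab (h _ _).eq⟩

instance [Subsingleton α] : IsCyclic (FreeGroup α) := by
  cases isEmpty_or_nonempty α
  · exact isCyclic_of_subsingleton
  · have := uniqueOfSubsingleton (Classical.arbitrary α)
    infer_instance

end FreeGroup

namespace IsFreeGroup

variable {G : Type*} [Group G] [IsFreeGroup G]

theorem isCyclic_of_subsingleton_generators [Subsingleton (Generators G)] : IsCyclic G :=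
  isCyclic_of_surjective (toFreeGroup G).symm.toMonoidHom (toFreeGroup G).symm.surjective

theorem isCyclic_of_forall_commute (h : ∀ x y : G, Commute x y) : IsCyclic G := by
  have : Subsingleton (Generators G) := FreeGroup.subsingleton_of_forall_commute fun x y => by
    simpa using (h ((toFreeGroup G).symm x) ((toFreeGroup G).symm y)).map (toFreeGroup G)
  exact isCyclic_of_subsingleton_generators

end IsFreeGroup

namespace FreeGroup

variable {α : Type*}

def exponentSum [DecidableEq α] (a : α) : FreeGroup α →* Multiplicative ℤ :=
  lift fun x => if x = a then .ofAdd 1 else 1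

/-- `⟨z, of a⟩` is abelian and free, hence cyclic; as `of a` has exponent sum `1` in `a`,
it generates this subgroup. -/
theorem exists_eq_zpow_of_commute_of {z : FreeGroup α} {a : α} (h : Commute z (of a)) :
    ∃ k : ℤ, z = of a ^ k := by
  classical
  have hcomm : ∀ x y : Subgroup.closure {z, of a}, Commute x y := by
    refine (Subgroup.isMulCommutative_closure ?_).is_comm.comm
    rintro x (rfl | rfl) y (rfl | rfl) <;> first | rfl | exact h.eq | exact h.eq.symm
  obtain ⟨c, hc⟩ := (IsFreeGroup.isCyclic_of_forall_commute hcomm).exists_generator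
  obtain ⟨i, hi⟩ := hc ⟨of a, Subgroup.subset_closure (by simp)⟩
  obtain ⟨j, hj⟩ := hc ⟨z, Subgroup.subset_closure (by simp)⟩
  replace hi : (c : FreeGroup α) ^ i = of a := congrArg Subtype.val hi
  replace hj : (c : FreeGroup α) ^ j = z := congrArg Subtype.val hj
  have hi_unit : i * (exponentSum a c).toAdd = 1 := by
    simpa [exponentSum] using congrArg (fun x => (exponentSum a x).toAdd) hi
  have hii : i * i = 1 := by
    rcases Int.eq_one_or_neg_one_of_mul_eq_one hi_unit with rfl | rfl <;> rfl
  exact ⟨i * j, by rw [← hi, ← _root_.zpow_mul, ← mul_assoc, hii, one_mul, hj]⟩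

theorem eq_one_of_commute_of_of {z : FreeGroup α} {a b : α} (hab : a ≠ b)
    (ha : Commute z (of a)) (hb : Commute z (of b)) : z = 1 := by
  classical
  obtain ⟨k, rfl⟩ := exists_eq_zpow_of_commute_of ha
  obtain ⟨l, hl⟩ := exists_eq_zpow_of_commute_of hb
  have := congrArg (exponentSum a) hl
  simp only [exponentSum, map_zpow, lift_apply_of, ↓reduceIte, hab.symm, _root_.one_zpow,
    IsMulTorsionFree.zpow_eq_one_iff, ofAdd_eq_one, one_ne_zero, false_or] at this
  simp [this]

/-- The centralizer is free by Nielsen–Schreier, and `g` is a nontrivial central element of it,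
so it has at most one generator. -/
theorem isCyclic_centralizer {g : FreeGroup α} (hg : g ≠ 1) :
    IsCyclic (Subgroup.centralizer {g}) := by
  let e := IsFreeGroup.toFreeGroup (Subgroup.centralizer {g})
  let g' : Subgroup.centralizer {g} := ⟨g, Subgroup.mem_centralizer_singleton_iff.mpr rfl⟩
  have hcomm (x) : Commute (e g') (of x) := by
    have : Commute g' (e.symm (of x)) :=
      Subtype.ext (Subgroup.mem_centralizer_singleton_iff.mp (e.symm (of x)).2).symm
    simpa using this.map e
  have : Subsingleton (IsFreeGroup.Generators (Subgroup.centralizer {g})) :=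
    ⟨fun s t => by_contra fun hst => hg <| by
      simpa [g'] using eq_one_of_commute_of_of hst (hcomm s) (hcomm t)⟩
  exact IsFreeGroup.isCyclic_of_subsingleton_generators

theorem exists_centralizer_le_zpowers {g : FreeGroup α} (hg : g ≠ 1) :
    ∃ w : FreeGroup α, w ≠ 1 ∧ (¬ ∃ (z : FreeGroup α) (k : ℕ), 2 ≤ k ∧ w = z ^ k) ∧
      ∀ x, Commute g x → ∃ k : ℤ, x = w ^ k := by
  obtain ⟨c, hc⟩ := (isCyclic_centralizer hg).exists_generator
  have hpow (x) (hx : Commute g x) : ∃ k : ℤ, x = (c : FreeGroup α) ^ k := by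
    obtain ⟨k, hk⟩ := hc ⟨x, Subgroup.mem_centralizer_singleton_iff.mpr hx.eq.symm⟩
    exact ⟨k, (congrArg Subtype.val hk).symm⟩
  obtain ⟨j, hj⟩ := hpow g (Commute.refl g)
  have hc1 : (c : FreeGroup α) ≠ 1 := fun h => hg (by rw [hj, h, _root_.one_zpow])
  refine ⟨c, hc1, ?_, hpow⟩
  rintro ⟨z, k, hk, hz⟩
  have hgz : Commute g z := by
    rw [hj, hz]
    exact ((Commute.refl z).pow_left k).zpow_left j
  obtain ⟨t, ht⟩ := hpow z hgz
  have htk : 1 = t * k := injective_zpow_iff_not_isOfFinOrder.mpr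
    (not_isOfFinOrder_of_isMulTorsionFree hc1) <| show (c : FreeGroup α) ^ (1 : ℤ) = c ^ (t * k) by
      rw [zpow_one, _root_.zpow_mul, ← ht, zpow_natCast, ← hz]
  have : (k : ℤ) ≤ 1 := Int.le_of_dvd one_pos ⟨t, by rw [htk, mul_comm]⟩
  omega

end FreeGroup

theorem MonoidHom.exists_eq_zpow_toAdd {G H : Type*} [Group G] [Group H] [IsMulTorsionFree H]
    (f : G →* H) {w : H} (hw : w ≠ 1) (hf : ∀ x, ∃ k : ℤ, f x = w ^ k) :
    ∃ κ : G →* Multiplicative ℤ, ∀ x, f x = w ^ (κ x).toAdd := by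
  have hinj : Function.Injective (w ^ · : ℤ → H) :=
    injective_zpow_iff_not_isOfFinOrder.mpr (not_isOfFinOrder_of_isMulTorsionFree hw)
  choose κ hκ using hf
  refine ⟨{ toFun := fun x => .ofAdd (κ x), map_one' := ?_, map_mul' := fun x y => ?_ }, hκ⟩
  · exact congrArg Multiplicative.ofAdd <| hinj <| show w ^ κ 1 = w ^ (0 : ℤ) by
      rw [← hκ, map_one, zpow_zero]
  · exact congrArg Multiplicative.ofAdd <| hinj <| show w ^ κ (x * y) = w ^ (κ x + κ y) by
      rw [_root_.zpow_add, ← hκ, ← hκ, ← hκ, map_mul]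

section LinearForms

variable {m n : ℕ} {A : Type*} [AddCommGroup A]

theorem toAdd_map_ofAdd_eq_sum (f : Multiplicative (Fin m → ℤ) →* Multiplicative A)
    (a : Fin m → ℤ) :
    (f (.ofAdd a)).toAdd = ∑ i, a i • (f (.ofAdd (Pi.single i 1))).toAdd := by
  conv_lhs => rw [← Finset.univ_sum_single a]
  simp only [ofAdd_sum, map_prod, toAdd_prod]
  refine Finset.sum_congr rfl fun i _ => ?_
  rw [← toAdd_zpow, ← map_zpow, ← ofAdd_zsmul, ← Pi.single_smul', smul_eq_mul, mul_one]

theorem toAdd_map_eq_sum_abVec (f : FreeGroup (Fin n) →* Multiplicative A)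
    (u : FreeGroup (Fin n)) :
    (f u).toAdd = ∑ j, abVec u j • (f (.of j)).toAdd := by
  induction u using FreeGroup.induction_on with
  | C1 => simp [abVec]
  | of j => simp [abVec, Pi.single_apply]
  | inv_of j h => simp [abVec] at h ⊢
  | mul x y hx hy => simp [abVec, add_smul, Finset.sum_add_distrib, hx, hy]

namespace GFab

theorem mk_eq_mul (a : Fin m → ℤ) (u : FreeGroup (Fin n)) :
    ((.ofAdd a, u) : GFab m n) = (.ofAdd a, 1) * (1, u) :=
  (Prod.fst_mul_snd _).symm

theorem commute_ofAdd_one (a : Fin m → ℤ) (x : GFab m n) : Commute (.ofAdd a, 1) x :=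
  Prod.ext (mul_comm _ _) (Commute.one_left _).eq

theorem toAdd_map_mk_eq_sum (f : GFab m n →* Multiplicative A) (a : Fin m → ℤ)
    (u : FreeGroup (Fin n)) :
    (f (.ofAdd a, u)).toAdd = ∑ i, a i • (f (.ofAdd (Pi.single i 1), 1)).toAdd +
      ∑ j, abVec u j • (f (1, .of j)).toAdd := by
  rw [mk_eq_mul, map_mul, toAdd_mul]
  exact congrArg₂ (· + ·) (toAdd_map_ofAdd_eq_sum (f.comp (.inl _ _)) a)
    (toAdd_map_eq_sum_abVec (f.comp (.inr _ _)) u)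

theorem exists_vecMul_of_monoidHom {k : ℕ} (f : GFab m n →* Multiplicative (Fin k → ℤ)) :
    ∃ (Q : Matrix (Fin m) (Fin k) ℤ) (P : Matrix (Fin n) (Fin k) ℤ), ∀ a u,
      f (.ofAdd a, u) = .ofAdd (a ᵥ* Q + abVec u ᵥ* P) :=
  ⟨.of fun i => (f (.ofAdd (Pi.single i 1), 1)).toAdd, .of fun j => (f (1, .of j)).toAdd,
    fun a u => by rw [← ofAdd_toAdd (f _), toAdd_map_mk_eq_sum, vecMul_eq_sum, vecMul_eq_sum]; rfl⟩

theorem exists_dotProduct_of_monoidHom (f : GFab m n →* Multiplicative ℤ) :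
    ∃ (l : Fin m → ℤ) (h : Fin n → ℤ), ∀ a u,
      f (.ofAdd a, u) = .ofAdd (a ⬝ᵥ l + abVec u ⬝ᵥ h) :=
  ⟨fun i => (f (.ofAdd (Pi.single i 1), 1)).toAdd, fun j => (f (1, .of j)).toAdd,
    fun a u => by simp only [dotProduct, ← smul_eq_mul, ← toAdd_map_mk_eq_sum]; rfl⟩

end GFab

end LinearForms

theorem classification_of_endomorphisms_general (m n : ℕ)
    (Ψ : GFab m n →* GFab m n) :
    ∃ (Q : Matrix (Fin m) (Fin m) ℤ) (P : Matrix (Fin n) (Fin m) ℤ),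
      (∃ φ : FreeGroup (Fin n) →* FreeGroup (Fin n),
        ∀ (a : Fin m → ℤ) (u : FreeGroup (Fin n)),
          Ψ (Multiplicative.ofAdd a, u)
            = (Multiplicative.ofAdd (a ᵥ* Q + abVec u ᵥ* P), φ u)) ∨
      (∃ (w : FreeGroup (Fin n)) (l : Fin m → ℤ) (h : Fin n → ℤ),
        w ≠ 1 ∧ (¬ ∃ (z : FreeGroup (Fin n)) (k : ℕ), 2 ≤ k ∧ w = z ^ k) ∧ l ≠ 0 ∧
        ∀ (a : Fin m → ℤ) (u : FreeGroup (Fin n)),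
          Ψ (Multiplicative.ofAdd a, u)
            = (Multiplicative.ofAdd (a ᵥ* Q + abVec u ᵥ* P),
                w ^ (a ⬝ᵥ l + abVec u ⬝ᵥ h))) := by
  obtain ⟨Q, P, hQP⟩ := GFab.exists_vecMul_of_monoidHom ((MonoidHom.fst _ _).comp Ψ)
  refine ⟨Q, P, ?_⟩
  by_cases htriv : ∀ a : Fin m → ℤ, (Ψ (.ofAdd a, 1)).2 = 1
  · refine .inl ⟨(MonoidHom.snd _ _).comp (Ψ.comp (.inr _ _)), fun a u => Prod.ext (hQP a u) ?_⟩
    rw [GFab.mk_eq_mul, map_mul, Prod.snd_mul, htriv, one_mul]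
    rfl
  push Not at htriv
  obtain ⟨a₀, hg⟩ := htriv
  obtain ⟨w, hw, hw_prim, hw_pow⟩ := FreeGroup.exists_centralizer_le_zpowers hg
  obtain ⟨κ, hκ⟩ := ((MonoidHom.snd _ _).comp Ψ).exists_eq_zpow_toAdd hw fun x =>
    hw_pow _ ((GFab.commute_ofAdd_one a₀ x).map ((MonoidHom.snd _ _).comp Ψ))
  obtain ⟨l, h, hlh⟩ := GFab.exists_dotProduct_of_monoidHom κ
  refine .inr ⟨w, l, h, hw, hw_prim, ?_, fun a u => Prod.ext (hQP a u) ?_⟩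
  · rintro rfl
    exact hg (by simpa [hlh, abVec] using hκ (.ofAdd a₀, 1))
  · simpa [hlh] using hκ (.ofAdd a, u)

/-- Every endomorphism of `ℤ^m × F_n` (m ≥ 1, n ≥ 1) is given by
`(a,u) ↦ (aQ + ūP, σ(a,u))` where σ is either (i) of the form `φ(u)` for an endomorphism
φ of `F_n`, or (ii) of the form `w^(a·lᵀ + ū·hᵀ)` with `w ≠ 1` not a proper power and
`l ≠ 0`. -/
theorem classification_of_endomorphisms (m n : ℕ) (hm : 1 ≤ m) (hn : 1 ≤ n)
    (Ψ : GFab m n →* GFab m n) :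
    ∃ (Q : Matrix (Fin m) (Fin m) ℤ) (P : Matrix (Fin n) (Fin m) ℤ),
      (∃ φ : FreeGroup (Fin n) →* FreeGroup (Fin n),
        ∀ (a : Fin m → ℤ) (u : FreeGroup (Fin n)),
          Ψ (Multiplicative.ofAdd a, u)
            = (Multiplicative.ofAdd (a ᵥ* Q + abVec u ᵥ* P), φ u)) ∨
      (∃ (w : FreeGroup (Fin n)) (l : Fin m → ℤ) (h : Fin n → ℤ),
        w ≠ 1 ∧ (¬ ∃ (z : FreeGroup (Fin n)) (k : ℕ), 2 ≤ k ∧ w = z ^ k) ∧ l ≠ 0 ∧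
        ∀ (a : Fin m → ℤ) (u : FreeGroup (Fin n)),
          Ψ (Multiplicative.ofAdd a, u)
            = (Multiplicative.ofAdd (a ᵥ* Q + abVec u ᵥ* P),
                w ^ (a ⬝ᵥ l + abVec u ⬝ᵥ h))) :=
  classification_of_endomorphisms_general m n Ψ
end

section
/- Let m ≥ 1, n ≥ 2 and let Ψ be an endomorphism of G = ℤ^m × F_n. Then Ψ is injective if and only if there exist an injective endomorphism φ of F_n, an m×m integer matrix Q with det(Q) ≠ 0, and an n×m integer matrix P such that Ψ(a,u) = (aQ + ūP, φ(u)) for all (a,u) ∈ G. -/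
/-!
`Ψ (a, 1)` commutes with every `Ψ (1, u)`. In a free group commutation is transitive on
nontrivial elements: the centralizer of `c ≠ 1` is free (Nielsen–Schreier) with `c` in its
centre, and a free group with nontrivial centre has rank at most one. Since `F_n` is not
commutative, injectivity of `Ψ` therefore forces the `F_n`-component `φ` of `Ψ` to be injective
and `Ψ` to map `ℤ^m` into `ℤ^m × 1`. The remaining components are homomorphisms into `ℤ^m`,
given by integer matrices `Q` and `P`, and `Ψ` is injective on `ℤ^m` exactly when `det Q ≠ 0`.
-/

open Matrix

namespace FreeGroup

variable {α : Type*}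

theorem subsingleton_of_forall_commute_s3 [DecidableEq α] {c : FreeGroup α} (hc : c ≠ 1)
    (hcen : ∀ x, Commute x c) : Subsingleton α := by
  have hne : c.toWord ≠ [] := mt toWord_eq_nil_iff.mp hc
  obtain ⟨p, L, hcL⟩ := List.exists_cons_of_ne_nil hne
  suffices ∀ j, j = p.1 from ⟨fun i j ↦ (this i).trans (this j).symm⟩
  intro j
  by_contra hj
  -- giving the letter `j` the exponent of the last letter of `c` prevents cancellation
  set b := (c.toWord.getLast hne).2
  have hright : (c * mk [(j, b)]).toWord = c.toWord ++ [(j, b)] := by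
    rw [toWord_mul, toWord_mk, reduce_singleton, IsReduced.reduce_eq]
    refine isReduced_toWord.append IsReduced.singleton ?_
    simp [List.getLast?_eq_some_getLast hne, b]
  have hleft : (mk [(j, b)] * c).toWord = (j, b) :: c.toWord := by
    rw [toWord_mul, toWord_mk, reduce_singleton, List.singleton_append, IsReduced.reduce_eq]
    rw [hcL, isReduced_cons_cons, ← hcL]
    exact ⟨fun h ↦ absurd h hj, isReduced_toWord⟩
  have h := congrArg toWord (hcen (mk [(j, b)])).eq
  rw [hleft, hright, hcL] at h
  exact hj (congrArg Prod.fst (List.cons.inj h).1)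

theorem commute_of_subsingleton [Subsingleton α] (x y : FreeGroup α) : Commute x y := by
  have hof : ∀ (a : α) (w : FreeGroup α), Commute (of a) w := by
    intro a w
    induction w using FreeGroup.induction_on with
    | C1 => exact Commute.one_right _
    | of b => rw [Subsingleton.elim a b]
    | inv_of b h => exact h.inv_right
    | mul u v hu hv => exact hu.mul_right hv
  induction x using FreeGroup.induction_on with
  | C1 => exact Commute.one_left _
  | of a => exact hof a y
  | inv_of a h => exact h.inv_left
  | mul u v hu hv => exact hu.mul_left hv

theorem not_commute_of_ne [DecidableEq α] {a b : α} (hab : a ≠ b) :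
    ¬Commute (of a) (of b) := by
  intro h
  have hw := congrArg toWord h.eq
  rw [toWord_mul, toWord_mul, toWord_of, toWord_of, IsReduced.reduce_eq, IsReduced.reduce_eq]
    at hw
  · exact hab (congrArg Prod.fst (List.cons.inj hw).1)
  all_goals simp [isReduced_cons_cons, IsReduced.singleton, hab, Ne.symm hab]

end FreeGroup

namespace IsFreeGroup

variable {G : Type*} [Group G] [IsFreeGroup G]

theorem commute_of_forall_commute {c : G} (hc : c ≠ 1) (hcen : ∀ x, Commute x c) (x y : G) :
    Commute x y := by
  classical
  let e := toFreeGroup G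
  have : Subsingleton (Generators G) :=
    FreeGroup.subsingleton_of_forall_commute_s3 (c := e c) (by simpa using hc)
      fun w ↦ by simpa using (hcen (e.symm w)).map e
  exact Commute.of_map e.injective (FreeGroup.commute_of_subsingleton _ _)

theorem commute_of_commute_of_ne_one {c x y : G} (hc : c ≠ 1) (hx : Commute x c)
    (hy : Commute y c) : Commute x y := by
  -- the centralizer of `c` is free by Nielsen–Schreier, and `c` is central in it
  let K := Subgroup.centralizer ({c} : Set G)
  have mem : ∀ {z}, Commute z c → z ∈ K := Subgroup.mem_centralizer_singleton_iff.mpr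
  have := commute_of_forall_commute (c := (⟨c, mem (Commute.refl c)⟩ : K))
    (fun h ↦ hc congr($h.1))
    (fun z ↦ Subtype.ext (Subgroup.mem_centralizer_singleton_iff.mp z.2))
    ⟨x, mem hx⟩ ⟨y, mem hy⟩
  exact this.map K.subtype

end IsFreeGroup

namespace MonoidHom

theorem apply_mk_eq_of_snd_map_inl {A F B H : Type*} [MulOneClass A] [MulOneClass F]
    [MulOneClass B] [MulOneClass H] {Ψ : A × F →* B × H} (hΨ : ∀ a, (Ψ (a, 1)).2 = 1)
    (a : A) (u : F) :
    Ψ (a, u) = ((Ψ (a, 1)).1 * (Ψ (1, u)).1, (Ψ (1, u)).2) := by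
  rw [← one_mul (Ψ (1, u)).2, ← hΨ a, ← Prod.mk_mul_mk, ← map_mul, Prod.mk_mul_mk,
    mul_one, one_mul]

variable {A F : Type*} [CommGroup A] [Group F] [IsFreeGroup F] {Ψ : A × F →* A × F}

theorem injective_snd_comp_inr {x y : F} (hxy : ¬Commute x y)
    (hΨ : Function.Injective Ψ) :
    Function.Injective ((MonoidHom.snd A F).comp (Ψ.comp (MonoidHom.inr A F))) := by
  rw [injective_iff_map_eq_one]
  intro w hw
  by_contra hw1
  -- `Ψ (1, w)` lies in the central factor `A × 1`, so by injectivity `w` is central in `F`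
  have hcen : ∀ v : F, Commute v w := by
    intro v
    have hΨw : Ψ (1, w) = ((Ψ (1, w)).1, 1) := Prod.ext rfl hw
    have : Commute (Ψ (1, v)) (Ψ (1, w)) :=
      Prod.commute_iff.mpr ⟨Commute.all _ _, by rw [hΨw]; exact Commute.one_right _⟩
    exact (Prod.commute_iff.mp (this.of_map hΨ)).2
  exact hxy (IsFreeGroup.commute_of_commute_of_ne_one hw1 (hcen x) (hcen y))

theorem snd_map_inl_eq_one {x y : F} (hxy : ¬Commute x y) (hΨ : Function.Injective Ψ) (a : A) :
    (Ψ (a, 1)).2 = 1 := by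
  by_contra hc
  have hφ := injective_snd_comp_inr hxy hΨ
  have hcomm : ∀ u : F, Commute ((Ψ (1, u)).2) (Ψ (a, 1)).2 := fun u ↦
    (Prod.commute_iff.mpr ⟨Commute.one_left a, Commute.one_right u⟩).map Ψ |>.map (snd A F)
  exact hxy ((IsFreeGroup.commute_of_commute_of_ne_one hc (hcomm x) (hcomm y)).of_map hφ)

end MonoidHom

theorem AddMonoidHom.exists_vecMul_eq {ι κ : Type*} [Fintype ι] [DecidableEq ι]
    (f : (ι → ℤ) →+ (κ → ℤ)) : ∃ Q : Matrix ι κ ℤ, ∀ a, f a = a ᵥ* Q :=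
  ⟨(LinearMap.toMatrix' f.toIntLinearMap)ᵀ, fun a ↦ by
    rw [vecMul_transpose, LinearMap.toMatrix'_mulVec, AddMonoidHom.coe_toIntLinearMap]⟩

theorem exists_abVec_vecMul_eq {n : ℕ} {κ : Type*}
    (f : FreeGroup (Fin n) →* Multiplicative (κ → ℤ)) :
    ∃ P : Matrix (Fin n) κ ℤ, ∀ u, (f u).toAdd = abVec u ᵥ* P := by
  set P : Matrix (Fin n) κ ℤ := Matrix.of fun j ↦ (f (FreeGroup.of j)).toAdd
  have hf : f = (AddMonoidHom.toMultiplicative (vecMulLinear P).toAddMonoidHom).comp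
      (FreeGroup.lift fun i ↦ Multiplicative.ofAdd (Pi.single i 1)) :=
    FreeGroup.ext_hom _ _ fun j ↦ by simp [P]
  exact ⟨P, fun u ↦ by rw [hf]; rfl⟩

theorem Matrix.vecMul_injective_iff_det_ne_zero {n R : Type*} [Fintype n] [DecidableEq n]
    [CommRing R] [IsDomain R] {Q : Matrix n n R} :
    Function.Injective (· ᵥ* Q) ↔ Q.det ≠ 0 := by
  rw [← isRightRegular_iff_vecMul_injective, isRightRegular_iff_nonsingular,
    nonsingular_iff_det_ne_zero]

theorem GFab.injective_of_apply_eq {m n : ℕ} {Ψ : GFab m n →* GFab m n}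
    {φ : FreeGroup (Fin n) →* FreeGroup (Fin n)} {Q : Matrix (Fin m) (Fin m) ℤ}
    {P : Matrix (Fin n) (Fin m) ℤ} (hφ : Function.Injective φ)
    (hQ : Function.Injective (· ᵥ* Q))
    (hΨ : ∀ a u, Ψ (Multiplicative.ofAdd a, u)
      = (Multiplicative.ofAdd (a ᵥ* Q + abVec u ᵥ* P), φ u)) :
    Function.Injective Ψ := by
  rintro ⟨a, u⟩ ⟨b, v⟩ h
  rw [← ofAdd_toAdd a, ← ofAdd_toAdd b, hΨ, hΨ, Prod.mk.injEq, EmbeddingLike.apply_eq_iff_eq]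
    at h
  obtain rfl := hφ h.2
  have hab : a.toAdd ᵥ* Q = b.toAdd ᵥ* Q := add_right_cancel h.1
  rw [Multiplicative.toAdd.injective (hQ hab)]

theorem mono_characterization_general (m n : ℕ) (hn : 2 ≤ n)
    (Ψ : GFab m n →* GFab m n) :
    Function.Injective Ψ ↔
    ∃ (φ : FreeGroup (Fin n) →* FreeGroup (Fin n))
      (Q : Matrix (Fin m) (Fin m) ℤ) (P : Matrix (Fin n) (Fin m) ℤ),
      Function.Injective φ ∧ Q.det ≠ 0 ∧
      ∀ (a : Fin m → ℤ) (u : FreeGroup (Fin n)),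
        Ψ (Multiplicative.ofAdd a, u)
          = (Multiplicative.ofAdd (a ᵥ* Q + abVec u ᵥ* P), φ u) := by
  refine ⟨fun hΨ ↦ ?_, fun ⟨φ, Q, P, hφ, hQ, hform⟩ ↦
    GFab.injective_of_apply_eq hφ (vecMul_injective_iff_det_ne_zero.mpr hQ) hform⟩
  have hnoncomm := FreeGroup.not_commute_of_ne (a := (⟨0, by omega⟩ : Fin n))
    (b := ⟨1, by omega⟩) (by simp [Fin.ext_iff])
  obtain ⟨Q, hQ⟩ := AddMonoidHom.exists_vecMul_eq
    (AddMonoidHom.toMultiplicative.symm ((MonoidHom.fst _ _).comp (Ψ.comp (MonoidHom.inl _ _))))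
  obtain ⟨P, hP⟩ :=
    exists_abVec_vecMul_eq ((MonoidHom.fst _ _).comp (Ψ.comp (MonoidHom.inr _ _)))
  have hform : ∀ a u, Ψ (Multiplicative.ofAdd a, u)
      = (Multiplicative.ofAdd (a ᵥ* Q + abVec u ᵥ* P), (Ψ (1, u)).2) := fun a u ↦ by
    rw [MonoidHom.apply_mk_eq_of_snd_map_inl (MonoidHom.snd_map_inl_eq_one hnoncomm hΨ),
      ofAdd_add, ← hQ, ← hP]
    rfl
  refine ⟨_, Q, P, MonoidHom.injective_snd_comp_inr hnoncomm hΨ, ?_, hform⟩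
  rw [← vecMul_injective_iff_det_ne_zero]
  intro a b h
  have hab : Ψ (Multiplicative.ofAdd a, 1) = Ψ (Multiplicative.ofAdd b, 1) := by
    rw [hform, hform, show a ᵥ* Q = b ᵥ* Q from h]
  simpa using congrArg Prod.fst (hΨ hab)

/-- An endomorphism Ψ of `ℤ^m × F_n` (m ≥ 1, n ≥ 2) is injective iff it is of type I
with φ an injective endomorphism of `F_n` and `det Q ≠ 0`. -/
theorem mono_characterization (m n : ℕ) (hm : 1 ≤ m) (hn : 2 ≤ n)
    (Ψ : GFab m n →* GFab m n) :
    Function.Injective Ψ ↔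
    ∃ (φ : FreeGroup (Fin n) →* FreeGroup (Fin n))
      (Q : Matrix (Fin m) (Fin m) ℤ) (P : Matrix (Fin n) (Fin m) ℤ),
      Function.Injective φ ∧ Q.det ≠ 0 ∧
      ∀ (a : Fin m → ℤ) (u : FreeGroup (Fin n)),
        Ψ (Multiplicative.ofAdd a, u)
          = (Multiplicative.ofAdd (a ᵥ* Q + abVec u ᵥ* P), φ u) :=
  mono_characterization_general m n hn Ψ
end

section
/- Let m ≥ 1, n ≥ 2 and let Ψ be an endomorphism of G = ℤ^m × F_n. Then Ψ is an automorphism (i.e. bijective) if and only if there exist an automorphism φ of F_n, a matrix Q ∈ GL(m,ℤ) (an m×m integer matrix invertible over ℤ, equivalently with det(Q) = ±1), and an n×m integer matrix P such that Ψ(a,u) = (aQ + ūP, φ(u)) for all (a,u) ∈ G. -/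
/-!
The centre of `F_n` is trivial for `n ≥ 2`. Hence a surjective endomorphism `Ψ` of `A × H`, with
`A` abelian and `H` centreless, sends the central subgroup `A × 1` into `A × 1`, so it is
triangular: `Ψ (a, u) = (α a * β u, φ u)`. Such a `Ψ` is bijective iff `α` and `φ` are; for the
forward implication, `Ψ⁻¹` is triangular as well and its diagonal part inverts `α`. For `A = ℤ^m`
the map `α` is right multiplication by a matrix `Q`, bijective iff `det Q = ±1`, and `β : F_n → ℤ^m`
factors through the abelianisation as `u ↦ ū P`.
-/

open Matrix

theorem FreeGroup.center_eq_bot {α : Type*} [Nontrivial α] :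
    Subgroup.center (FreeGroup α) = ⊥ := by
  classical
  refine (Subgroup.eq_bot_iff_forall _).2 fun w hw => ?_
  by_contra hw1
  obtain ⟨⟨k, b⟩, L, hL⟩ := List.exists_cons_of_ne_nil (mt toWord_eq_nil_iff.1 hw1)
  obtain ⟨j, hjk⟩ := exists_ne k
  have hcomm : of j * w = w * of j := Subgroup.mem_center_iff.1 hw (of j)
  have hred : IsReduced ((j, true) :: w.toWord) := by
    rw [hL]
    exact isReduced_cons_cons.2 ⟨fun h => (hjk h).elim, hL ▸ isReduced_toWord⟩
  have hleft : (of j * w).toWord = (j, true) :: w.toWord := by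
    rw [toWord_mul, toWord_of, List.singleton_append, hred.reduce_eq]
  -- `w * of j = of j * w` has length `|w| + 1`, so no cancellation occurs on the right either
  have hright : (j, true) :: w.toWord = w.toWord ++ [(j, true)] := by
    rw [← hleft, hcomm]
    refine (toWord_mul_sublist w (of j)).eq_of_length ?_
    rw [← hcomm, hleft]
    simp [toWord_of]
  rw [hL] at hright
  exact hjk (Prod.ext_iff.1 (List.cons.inj hright).1).1

theorem MonoidHom.map_mem_center {G H : Type*} [Group G] [Group H] {f : G →* H}
    (hf : Function.Surjective f) {z : G} (hz : z ∈ Subgroup.center G) :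
    f z ∈ Subgroup.center H := by
  refine Subgroup.mem_center_iff.2 fun h => ?_
  obtain ⟨g, rfl⟩ := hf h
  rw [← map_mul, ← map_mul, Subgroup.mem_center_iff.1 hz g]

section CenterlessFactor

variable {A H : Type*} [CommGroup A] [Group H]

theorem exists_prod_decomposition_of_surjective (hH : Subgroup.center H = ⊥)
    {Ψ : A × H →* A × H} (hΨ : Function.Surjective Ψ) :
    ∃ (α : A →* A) (β : H →* A) (φ : H →* H), ∀ a u, Ψ (a, u) = (α a * β u, φ u) := by
  have hcentral : ∀ a : A, (Ψ (a, 1)).2 = 1 := fun a => by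
    have hmem : (a, (1 : H)) ∈ Subgroup.center (A × H) := by
      rw [Subgroup.center_prod, CommGroup.center_eq_top]
      exact ⟨trivial, one_mem _⟩
    have := MonoidHom.map_mem_center (f := (MonoidHom.snd A H).comp Ψ)
      (Prod.snd_surjective.comp hΨ) hmem
    rwa [hH, Subgroup.mem_bot] at this
  refine ⟨(MonoidHom.fst A H).comp (Ψ.comp (MonoidHom.inl A H)),
    (MonoidHom.fst A H).comp (Ψ.comp (MonoidHom.inr A H)),
    (MonoidHom.snd A H).comp (Ψ.comp (MonoidHom.inr A H)), fun a u => ?_⟩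
  have hsplit : Ψ (a, u) = Ψ (a, 1) * Ψ (1, u) := by
    rw [← map_mul, Prod.mk_mul_mk, mul_one, one_mul]
  rw [hsplit]
  ext
  · rfl
  · simp [hcentral]

theorem bijective_of_prod_decomposition {Ψ : A × H →* A × H} {α : A →* A} {β : H →* A}
    {φ : H →* H} (hα : Function.Bijective α) (hφ : Function.Bijective φ)
    (hΨ : ∀ a u, Ψ (a, u) = (α a * β u, φ u)) : Function.Bijective Ψ := by
  refine ⟨fun ⟨a, u⟩ ⟨b, v⟩ h => ?_, fun ⟨b, w⟩ => ?_⟩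
  · rw [hΨ, hΨ, Prod.mk.injEq] at h
    obtain rfl : u = v := hφ.1 h.2
    rw [hα.1 (mul_right_cancel h.1)]
  · obtain ⟨u, rfl⟩ := hφ.2 w
    obtain ⟨a, ha⟩ := hα.2 (b * (β u)⁻¹)
    exact ⟨(a, u), by rw [hΨ, ha, inv_mul_cancel_right]⟩

theorem bijective_iff_exists_prod_decomposition (hH : Subgroup.center H = ⊥)
    (Ψ : A × H →* A × H) :
    Function.Bijective Ψ ↔ ∃ (α : A →* A) (β : H →* A) (φ : H →* H),
      Function.Bijective α ∧ Function.Bijective φ ∧ ∀ a u, Ψ (a, u) = (α a * β u, φ u) := by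
  refine ⟨fun hbij => ?_, fun ⟨α, β, φ, hα, hφ, hΨ⟩ => bijective_of_prod_decomposition hα hφ hΨ⟩
  set e := MulEquiv.ofBijective Ψ hbij
  obtain ⟨α, β, φ, hΨ⟩ := exists_prod_decomposition_of_surjective hH hbij.2
  obtain ⟨α', _, _, hΨ'⟩ :=
    exists_prod_decomposition_of_surjective hH (Ψ := e.symm.toMonoidHom) e.symm.surjective
  have hα : ∀ a, Ψ (a, 1) = (α a, 1) := fun a => by simpa using hΨ a 1
  have hα' : ∀ a, e.symm (a, 1) = (α' a, 1) := fun a => by simpa using hΨ' a 1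
  have hinv : Function.LeftInverse α' α ∧ Function.RightInverse α' α := by
    refine ⟨fun a => ?_, fun a => ?_⟩
    · simpa [e, hα, hα'] using congrArg Prod.fst (e.symm_apply_apply (a, 1))
    · simpa [e, hα, hα'] using congrArg Prod.fst (e.apply_symm_apply (a, 1))
  refine ⟨α, β, φ, Function.bijective_iff_has_inverse.2 ⟨α', hinv⟩, ⟨?_, fun v => ?_⟩, hΨ⟩
  · refine (injective_iff_map_eq_one φ).2 fun u hu => ?_
    have : Ψ (α' (β u)⁻¹, u) = Ψ 1 := by rw [hΨ, hu, hinv.2, inv_mul_cancel, map_one]; rfl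
    exact congrArg Prod.snd (hbij.1 this)
  · obtain ⟨⟨a, u⟩, h⟩ := hbij.2 (1, v)
    exact ⟨u, by simpa [hΨ] using congrArg Prod.snd h⟩

end CenterlessFactor

theorem exists_matrix_of_monoidHom {k m : ℕ}
    (α : Multiplicative (Fin k → ℤ) →* Multiplicative (Fin m → ℤ)) :
    ∃ Q : Matrix (Fin k) (Fin m) ℤ, ∀ a, α (.ofAdd a) = .ofAdd (a ᵥ* Q) := by
  let f : (Fin k → ℤ) →ₗ[ℤ] Fin m → ℤ := (AddMonoidHom.toMultiplicative.symm α).toIntLinearMap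
  refine ⟨LinearMap.toMatrixRight' f, fun a => ?_⟩
  rw [← toLinearMapRight'_apply, LinearEquiv.symm_apply_apply]
  rfl

theorem exists_matrix_of_freeGroup_hom {n m : ℕ}
    (β : FreeGroup (Fin n) →* Multiplicative (Fin m → ℤ)) :
    ∃ P : Matrix (Fin n) (Fin m) ℤ, ∀ u, β u = .ofAdd (abVec u ᵥ* P) := by
  refine ⟨.of fun i => (β (.of i)).toAdd, fun u => DFunLike.congr_fun (?_ : β =
    (AddMonoidHom.toMultiplicative (vecMulLinear _).toAddMonoidHom).comp
      (FreeGroup.lift fun i => .ofAdd (Pi.single i 1))) u⟩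
  exact FreeGroup.ext_hom _ _ fun i => by simp

theorem vecMul_bijective_iff_det {m : ℕ} {Q : Matrix (Fin m) (Fin m) ℤ} :
    Function.Bijective (· ᵥ* Q) ↔ Q.det = 1 ∨ Q.det = -1 := by
  rw [← Int.isUnit_iff, ← isUnit_iff_isUnit_det]
  exact ⟨fun h => vecMul_surjective_iff_isUnit.1 h.2,
    fun h => ⟨vecMul_injective_of_isUnit h, vecMul_surjective_iff_isUnit.2 h⟩⟩

theorem auto_characterization_general (m n : ℕ) (hn : 2 ≤ n)
    (Ψ : GFab m n →* GFab m n) :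
    Function.Bijective Ψ ↔
    ∃ (φ : FreeGroup (Fin n) →* FreeGroup (Fin n))
      (Q : Matrix (Fin m) (Fin m) ℤ) (P : Matrix (Fin n) (Fin m) ℤ),
      Function.Bijective φ ∧ (Q.det = 1 ∨ Q.det = -1) ∧
      ∀ (a : Fin m → ℤ) (u : FreeGroup (Fin n)),
        Ψ (Multiplicative.ofAdd a, u)
          = (Multiplicative.ofAdd (a ᵥ* Q + abVec u ᵥ* P), φ u) := by
  have : Nontrivial (Fin n) := Fin.nontrivial_iff_two_le.2 hn
  rw [bijective_iff_exists_prod_decomposition FreeGroup.center_eq_bot Ψ]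
  constructor
  · rintro ⟨α, β, φ, hα, hφ, hΨ⟩
    obtain ⟨Q, hQ⟩ := exists_matrix_of_monoidHom α
    obtain ⟨P, hP⟩ := exists_matrix_of_freeGroup_hom β
    have hQα : (· ᵥ* Q) = Multiplicative.toAdd ∘ α ∘ Multiplicative.ofAdd := funext fun a => by
      simp [hQ]
    have hQ_bij : Function.Bijective (· ᵥ* Q) := by
      rw [hQα]
      exact Multiplicative.toAdd.bijective.comp (hα.comp Multiplicative.ofAdd.bijective)
    refine ⟨φ, Q, P, hφ, vecMul_bijective_iff_det.1 hQ_bij, fun a u => ?_⟩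
    rw [hΨ, hQ, hP, ← ofAdd_add]
  · rintro ⟨φ, Q, P, hφ, hdet, hΨ⟩
    refine ⟨AddMonoidHom.toMultiplicative (vecMulLinear Q).toAddMonoidHom,
      (AddMonoidHom.toMultiplicative (vecMulLinear P).toAddMonoidHom).comp
        (FreeGroup.lift fun i => .ofAdd (Pi.single i 1)), φ, ?_, hφ, fun a u => hΨ a.toAdd u⟩
    exact Multiplicative.ofAdd.bijective.comp
      ((vecMul_bijective_iff_det.2 hdet).comp Multiplicative.toAdd.bijective)

/-- An endomorphism Ψ of `ℤ^m × F_n` (m ≥ 1, n ≥ 2) is an automorphism (bijective) iff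
it is of type I with φ an automorphism of `F_n` and `Q ∈ GL(m,ℤ)`, i.e. `det Q = ±1`. -/
theorem auto_characterization (m n : ℕ) (hm : 1 ≤ m) (hn : 2 ≤ n)
    (Ψ : GFab m n →* GFab m n) :
    Function.Bijective Ψ ↔
    ∃ (φ : FreeGroup (Fin n) →* FreeGroup (Fin n))
      (Q : Matrix (Fin m) (Fin m) ℤ) (P : Matrix (Fin n) (Fin m) ℤ),
      Function.Bijective φ ∧ (Q.det = 1 ∨ Q.det = -1) ∧
      ∀ (a : Fin m → ℤ) (u : FreeGroup (Fin n)),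
        Ψ (Multiplicative.ofAdd a, u)
          = (Multiplicative.ofAdd (a ᵥ* Q + abVec u ᵥ* P), φ u) :=
  auto_characterization_general m n hn Ψ
end

section
/- For m ≥ 1 and n ≥ 2, no 'type II' endomorphism of G = ℤ^m × F_n is injective and none is surjective: if Ψ(a,u) = (aQ + ūP, w^{a·lᵀ + ū·hᵀ}) for some w ∈ F_n, l ∈ ℤ^m, h ∈ ℤ^n, and integer matrices Q (m×m) and P (n×m), then Ψ is neither injective nor surjective. -/
/-!
A type II endomorphism sees `u` only through its exponent sums, which cannot tell `x y` from
`y x` for distinct generators `x, y`; and its `F_n`-component takes values in the cyclic group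
`⟨w⟩`, whereas `F_n` is not cyclic.
-/

open Matrix

/-- Sending `a` and `b` to the non-commuting transpositions `(0 1)` and `(1 2)` of `Fin 3`
separates `of a * of b` from `of b * of a`. -/
theorem FreeGroup.of_mul_of_ne_of_mul_of_s8 {α : Type*} {a b : α} (hab : a ≠ b) :
    of a * of b ≠ of b * of a := by
  classical
  let f : α → Equiv.Perm (Fin 3) := fun x =>
    if x = a then Equiv.swap 0 1 else if x = b then Equiv.swap 1 2 else 1
  intro heq
  have := congrArg (lift f) heq
  simp only [_root_.map_mul, lift_apply_of, f, if_neg hab.symm, ↓reduceIte] at this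
  exact absurd this (by decide)

theorem FreeGroup.not_isCyclic {α : Type*} {a b : α} (hab : a ≠ b) : ¬ IsCyclic (FreeGroup α) :=
  fun _ => of_mul_of_ne_of_mul_of_s8 hab (IsCyclic.commGroup.mul_comm _ _)

theorem abVec_mul {n : ℕ} (u v : FreeGroup (Fin n)) : abVec (u * v) = abVec u + abVec v := by
  simp [abVec]

theorem abVec_mul_comm {n : ℕ} (u v : FreeGroup (Fin n)) : abVec (u * v) = abVec (v * u) := by
  rw [abVec_mul, abVec_mul, add_comm]

theorem typeII_not_injective_not_surjective_general (m n : ℕ) (hn : 2 ≤ n)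
    (w : FreeGroup (Fin n)) (l : Fin m → ℤ) (h : Fin n → ℤ)
    (Q : Matrix (Fin m) (Fin m) ℤ) (P : Matrix (Fin n) (Fin m) ℤ)
    (Ψ : GFab m n →* GFab m n)
    (hΨ : ∀ (a : Fin m → ℤ) (u : FreeGroup (Fin n)),
      Ψ (Multiplicative.ofAdd a, u)
        = (Multiplicative.ofAdd (a ᵥ* Q + abVec u ᵥ* P),
            w ^ (a ⬝ᵥ l + abVec u ⬝ᵥ h))) :
    ¬ Function.Injective Ψ ∧ ¬ Function.Surjective Ψ := by
  have h01 : (⟨0, by omega⟩ : Fin n) ≠ ⟨1, by omega⟩ := by simp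
  constructor
  · intro hinj
    set x := FreeGroup.of (⟨0, by omega⟩ : Fin n)
    set y := FreeGroup.of (⟨1, by omega⟩ : Fin n)
    have hxy : Ψ (Multiplicative.ofAdd 0, x * y) = Ψ (Multiplicative.ofAdd 0, y * x) := by
      rw [hΨ, hΨ, abVec_mul_comm]
    exact FreeGroup.of_mul_of_ne_of_mul_of_s8 h01 (congrArg Prod.snd (hinj hxy))
  · intro hsurj
    refine FreeGroup.not_isCyclic h01 ⟨w, fun v => ?_⟩
    obtain ⟨⟨a, u⟩, hau⟩ := hsurj (1, v)
    rw [← ofAdd_toAdd a, hΨ] at hau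
    exact ⟨_, congrArg Prod.snd hau⟩

/-- No type II endomorphism of `ℤ^m × F_n` (m ≥ 1, n ≥ 2) is injective, and none
is surjective. -/
theorem typeII_not_injective_not_surjective (m n : ℕ) (hm : 1 ≤ m) (hn : 2 ≤ n)
    (w : FreeGroup (Fin n)) (l : Fin m → ℤ) (h : Fin n → ℤ)
    (Q : Matrix (Fin m) (Fin m) ℤ) (P : Matrix (Fin n) (Fin m) ℤ)
    (Ψ : GFab m n →* GFab m n)
    (hΨ : ∀ (a : Fin m → ℤ) (u : FreeGroup (Fin n)),
      Ψ (Multiplicative.ofAdd a, u)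
        = (Multiplicative.ofAdd (a ᵥ* Q + abVec u ᵥ* P),
            w ^ (a ⬝ᵥ l + abVec u ⬝ᵥ h))) :
    ¬ Function.Injective Ψ ∧ ¬ Function.Surjective Ψ :=
  typeII_not_injective_not_surjective_general m n hn w l h Q P Ψ hΨ
end

section
/- Let m ≥ 1, n ≥ 2 and let (a,u), (b,v) ∈ G = ℤ^m × F_n. There exists an automorphism Ψ of G with Ψ(a,u) = (b,v) if and only if both of the following hold: (1) there exists an automorphism φ of F_n with φ(u) = v, and (2) there exist a matrix Q ∈ GL(m,ℤ) and an n×m integer matrix P with aQ + ūP = b. -/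
open Matrix

/-!
Since `F_n` has trivial centre for `n ≥ 2`, the centre of `ℤ^m × F_n` is the factor `ℤ^m`. Every
automorphism preserves it and is therefore triangular, `(x, g) ↦ (τ x + σ g, φ g)` with
`τ ∈ Aut(ℤ^m)`, `σ : F_n → ℤ^m` a homomorphism and `φ ∈ Aut(F_n)`; conversely every such map is an
automorphism. Finally `τ` is `x ↦ xQ` for some `Q ∈ GL(m, ℤ)`, and `σ`, which factors through the
abelianization, is `g ↦ ḡP`.
-/

namespace FreeGroup

variable {α : Type*}

theorem isReduced_invRev {L : List (α × Bool)} (h : IsReduced L) : IsReduced (invRev L) := by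
  classical
  rw [isReduced_iff_reduce_eq, reduce_invRev, h.reduce_eq]

theorem isReduced_append_cons_invRev {L : List (α × Bool)} (hL : IsReduced L) {x : α × Bool}
    (hx : ∀ y ∈ L.getLast?, y.1 ≠ x.1) : IsReduced (L ++ x :: invRev L) := by
  have hhead : (invRev L).head? = L.getLast?.map fun y => (y.1, !y.2) := by
    simp [invRev, List.head?_reverse, List.getLast?_map]
  have hleft : IsReduced (L ++ [x]) :=
    List.isChain_append.mpr ⟨hL, List.isChain_singleton x, fun y hy z hz => by
      simp only [List.head?_cons, Option.mem_def, Option.some_inj] at hz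
      exact fun h => absurd (hz ▸ h) (hx y hy)⟩
  have hright : IsReduced (x :: invRev L) :=
    List.isChain_cons.mpr ⟨fun z hz h => by
      rw [hhead, Option.mem_map] at hz
      obtain ⟨y, hy, rfl⟩ := hz
      exact absurd h.symm (hx y hy), isReduced_invRev hL⟩
  have h := hleft.append_overlap (L₂ := [x]) hright (List.cons_ne_nil x [])
  rwa [List.append_assoc, List.singleton_append] at h

/-- A central `w ≠ 1` commutes with `of j` for a letter `j` other than the last one of `w`, but
`w * of j * w⁻¹` is then a reduced word of length `2 * |w| + 1`. -/
theorem center_eq_bot_s9 [Nontrivial α] : Subgroup.center (FreeGroup α) = ⊥ := by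
  classical
  refine (Subgroup.eq_bot_iff_forall _).mpr fun w hw => ?_
  by_contra hw1
  set L := w.toWord
  have hL : L ≠ [] := mt toWord_eq_nil_iff.mp hw1
  obtain ⟨j, hj⟩ := exists_ne (L.getLast hL).1
  have hconj : mk (L ++ (j, true) :: invRev L) = of j := by
    rw [← List.singleton_append, ← List.append_assoc, ← mul_mk, ← mul_mk, ← inv_mk, mk_toWord]
    change w * of j * w⁻¹ = of j
    rw [← Subgroup.mem_center_iff.mp hw, mul_inv_cancel_right]
  have hred : IsReduced (L ++ (j, true) :: invRev L) :=
    isReduced_append_cons_invRev isReduced_toWord fun y hy => by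
      rw [List.getLast?_eq_some_getLast hL, Option.mem_def, Option.some_inj] at hy
      exact hy ▸ hj.symm
  have hlen := congrArg (List.length ∘ toWord) hconj
  simp [toWord_mk, hred.reduce_eq, toWord_of] at hlen
  exact hL (List.length_eq_zero_iff.mp (by omega))

end FreeGroup

section

variable {A H : Type*} [CommGroup A] [Group H]

theorem Subgroup.mem_center_prod_iff_snd_eq_one (hH : Subgroup.center H = ⊥) {p : A × H} :
    p ∈ Subgroup.center (A × H) ↔ p.2 = 1 := by
  rw [Subgroup.center_prod, Subgroup.mem_prod, hH, CommGroup.center_eq_top]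
  simp

namespace MulEquiv

def prodTriangular (τ : A ≃* A) (σ : H →* A) (φ : H ≃* H) : A × H ≃* A × H where
  toFun p := (τ p.1 * σ p.2, φ p.2)
  invFun p := (τ.symm (p.1 * (σ (φ.symm p.2))⁻¹), φ.symm p.2)
  left_inv p := by simp
  right_inv p := by simp
  map_mul' p q := by
    ext
    · simp only [Prod.fst_mul, Prod.snd_mul, map_mul]
      exact mul_mul_mul_comm _ _ _ _
    · exact map_mul φ _ _

theorem snd_apply_inl_eq_one (hH : Subgroup.center H = ⊥) (e : A × H ≃* A × H) (x : A) :
    (e (x, 1)).2 = 1 := by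
  rw [← Subgroup.mem_center_prod_iff_snd_eq_one hH]
  exact MulEquivClass.apply_mem_center e ((Subgroup.mem_center_prod_iff_snd_eq_one hH).mpr rfl)

theorem exists_eq_prodTriangular (hH : Subgroup.center H = ⊥) (e : A × H ≃* A × H) :
    ∃ τ σ φ, e = prodTriangular τ σ φ := by
  let τ : A →* A := (MonoidHom.fst A H).comp (e.toMonoidHom.comp (MonoidHom.inl A H))
  let σ : H →* A := (MonoidHom.fst A H).comp (e.toMonoidHom.comp (MonoidHom.inr A H))
  let φ : H →* H := (MonoidHom.snd A H).comp (e.toMonoidHom.comp (MonoidHom.inr A H))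
  have inl_eq (f : A × H ≃* A × H) (x : A) : f (x, 1) = ((f (x, 1)).1, 1) :=
    Prod.ext rfl (snd_apply_inl_eq_one hH f x)
  have apply_eq (x : A) (h : H) : e (x, h) = (τ x * σ h, φ h) := by
    rw [show (x, h) = (x, 1) * (1, h) by simp, map_mul, inl_eq e x]
    exact Prod.ext rfl (one_mul _)
  have hτ : Function.Bijective τ := by
    refine ⟨(injective_iff_map_eq_one τ).mpr fun x hx => ?_, fun y => ?_⟩
    · have : e (x, 1) = e 1 := by rw [inl_eq e, map_one]; exact Prod.ext hx rfl
      exact congrArg Prod.fst (e.injective this)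
    · refine ⟨(e.symm (y, 1)).1, ?_⟩
      show (e ((e.symm (y, 1)).1, 1)).1 = y
      rw [← inl_eq e.symm, apply_symm_apply]
  have hφ : Function.Bijective φ := by
    refine ⟨(injective_iff_map_eq_one φ).mpr fun h hh => ?_, fun w => ?_⟩
    · have hc : e (1, h) ∈ Set.center (A × H) :=
        (Subgroup.mem_center_prod_iff_snd_eq_one hH).mpr hh
      exact (Subgroup.mem_center_prod_iff_snd_eq_one hH).mp
        ((MulEquivClass.apply_mem_center_iff e).mp hc)
    · refine ⟨(e.symm (1, w)).2, ?_⟩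
      have := congrArg Prod.snd (apply_symm_apply e (1, w))
      rwa [← Prod.mk.eta (p := e.symm (1, w)), apply_eq] at this
  exact ⟨ofBijective τ hτ, σ, ofBijective φ hφ, ext fun p => apply_eq p.1 p.2⟩

theorem exists_prod_apply_eq_iff (hH : Subgroup.center H = ⊥) (a b : A) (u v : H) :
    (∃ e : A × H ≃* A × H, e (a, u) = (b, v)) ↔
      (∃ φ : H ≃* H, φ u = v) ∧ ∃ (τ : A ≃* A) (σ : H →* A), τ a * σ u = b := by
  constructor
  · rintro ⟨e, he⟩
    obtain ⟨τ, σ, φ, rfl⟩ := exists_eq_prodTriangular hH e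
    exact ⟨⟨φ, congrArg Prod.snd he⟩, τ, σ, congrArg Prod.fst he⟩
  · rintro ⟨⟨φ, hφ⟩, τ, σ, hτσ⟩
    exact ⟨prodTriangular τ σ φ, Prod.ext hτσ hφ⟩

end MulEquiv

end

theorem MonoidHom.exists_bijective_apply_eq_iff {G : Type*} [MulOneClass G] (x y : G) :
    (∃ f : G →* G, Function.Bijective f ∧ f x = y) ↔ ∃ e : G ≃* G, e x = y :=
  ⟨fun ⟨f, hf, hxy⟩ => ⟨MulEquiv.ofBijective f hf, hxy⟩,
    fun ⟨e, hxy⟩ => ⟨e.toMonoidHom, e.bijective, hxy⟩⟩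

section Matrix

variable {ι R : Type*} [Fintype ι] [DecidableEq ι] [CommRing R]

theorem Matrix.exists_isUnit_det_vecMul_eq (f : (ι → R) ≃ₗ[R] (ι → R)) :
    ∃ Q : Matrix ι ι R, IsUnit Q.det ∧ ∀ x, x ᵥ* Q = f x :=
  ⟨(LinearMap.toMatrix' (f : (ι → R) →ₗ[R] (ι → R)))ᵀ,
    by rw [det_transpose, LinearMap.det_toMatrix']; exact f.isUnit_det',
    fun x => by rw [vecMul_transpose, LinearMap.toMatrix'_mulVec]; rfl⟩

theorem Matrix.exists_linearEquiv_apply_eq_vecMul {Q : Matrix ι ι R} (hQ : IsUnit Q.det) :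
    ∃ f : (ι → R) ≃ₗ[R] (ι → R), ∀ x, f x = x ᵥ* Q := by
  rw [← isUnit_iff_isUnit_det] at hQ
  exact ⟨.ofBijective Q.vecMulLinear
    ⟨vecMul_injective_of_isUnit hQ, vecMul_surjective_iff_isUnit.mpr hQ⟩, fun _ => rfl⟩

end Matrix

theorem abVec_vecMul {n : ℕ} {κ : Type*} (P : Matrix (Fin n) κ ℤ) (g : FreeGroup (Fin n)) :
    abVec g ᵥ* P = Multiplicative.toAdd (FreeGroup.lift (fun i => Multiplicative.ofAdd (P i)) g) := by
  have : (AddMonoidHom.toMultiplicative P.vecMulLinear.toAddMonoidHom).comp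
      (FreeGroup.lift fun i => Multiplicative.ofAdd (Pi.single i 1)) =
      FreeGroup.lift fun i => Multiplicative.ofAdd (P i) :=
    FreeGroup.ext_hom _ _ fun i => by simp [Matrix.row]
  exact congrArg Multiplicative.toAdd (DFunLike.congr_fun this g)

theorem exists_mulEquiv_monoidHom_iff_exists_matrix {ι : Type*} [Fintype ι] [DecidableEq ι]
    {n : ℕ} (a b : ι → ℤ) (u : FreeGroup (Fin n)) :
    (∃ (τ : Multiplicative (ι → ℤ) ≃* Multiplicative (ι → ℤ))
        (σ : FreeGroup (Fin n) →* Multiplicative (ι → ℤ)),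
        τ (Multiplicative.ofAdd a) * σ u = Multiplicative.ofAdd b) ↔
      ∃ (Q : Matrix ι ι ℤ) (P : Matrix (Fin n) ι ℤ),
        (Q.det = 1 ∨ Q.det = -1) ∧ a ᵥ* Q + abVec u ᵥ* P = b := by
  simp only [← Int.isUnit_iff]
  constructor
  · rintro ⟨τ, σ, h⟩
    obtain ⟨Q, hQ, hτ⟩ :=
      exists_isUnit_det_vecMul_eq (AddEquiv.toMultiplicative.symm τ).toIntLinearEquiv
    let P : Matrix (Fin n) ι ℤ := .of fun i => Multiplicative.toAdd (σ (FreeGroup.of i))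
    have hσ : FreeGroup.lift (fun i => Multiplicative.ofAdd (P i)) = σ :=
      FreeGroup.lift.apply_symm_apply σ
    refine ⟨Q, P, hQ, ?_⟩
    rw [hτ, abVec_vecMul, hσ]
    exact congrArg Multiplicative.toAdd h
  · rintro ⟨Q, P, hQ, h⟩
    obtain ⟨f, hf⟩ := exists_linearEquiv_apply_eq_vecMul hQ
    refine ⟨AddEquiv.toMultiplicative f.toAddEquiv,
      FreeGroup.lift fun i => Multiplicative.ofAdd (P i), ?_⟩
    rw [← h, abVec_vecMul, ← hf]
    rfl

theorem whitehead_aut_general (m n : ℕ) (hn : 2 ≤ n)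
    (a b : Fin m → ℤ) (u v : FreeGroup (Fin n)) :
    (∃ Ψ : GFab m n →* GFab m n, Function.Bijective Ψ ∧
        Ψ (Multiplicative.ofAdd a, u) = (Multiplicative.ofAdd b, v)) ↔
    ((∃ φ : FreeGroup (Fin n) →* FreeGroup (Fin n), Function.Bijective φ ∧ φ u = v) ∧
     (∃ (Q : Matrix (Fin m) (Fin m) ℤ) (P : Matrix (Fin n) (Fin m) ℤ),
        (Q.det = 1 ∨ Q.det = -1) ∧ a ᵥ* Q + abVec u ᵥ* P = b)) := by
  have : Nontrivial (Fin n) := Fin.nontrivial_iff_two_le.mpr hn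
  rw [MonoidHom.exists_bijective_apply_eq_iff, MonoidHom.exists_bijective_apply_eq_iff,
    MulEquiv.exists_prod_apply_eq_iff FreeGroup.center_eq_bot_s9,
    exists_mulEquiv_monoidHom_iff_exists_matrix]

/-- Whitehead problem characterization for automorphisms of `ℤ^m × F_n` (m ≥ 1, n ≥ 2):
some automorphism sends `(a,u)` to `(b,v)` iff some automorphism of `F_n` sends u to v
and there exist `Q ∈ GL(m,ℤ)` and an integer matrix P with `aQ + ūP = b`. -/
theorem whitehead_aut (m n : ℕ) (hm : 1 ≤ m) (hn : 2 ≤ n)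
    (a b : Fin m → ℤ) (u v : FreeGroup (Fin n)) :
    (∃ Ψ : GFab m n →* GFab m n, Function.Bijective Ψ ∧
        Ψ (Multiplicative.ofAdd a, u) = (Multiplicative.ofAdd b, v)) ↔
    ((∃ φ : FreeGroup (Fin n) →* FreeGroup (Fin n), Function.Bijective φ ∧ φ u = v) ∧
     (∃ (Q : Matrix (Fin m) (Fin m) ℤ) (P : Matrix (Fin n) (Fin m) ℤ),
        (Q.det = 1 ∨ Q.det = -1) ∧ a ᵥ* Q + abVec u ᵥ* P = b)) :=
  whitehead_aut_general m n hn a b u v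
end

section
/- Let a ∈ ℤ^m and u ∈ ℤ^n be nonzero row vectors, let b ∈ ℤ^m, and set α = gcd of the entries of a and μ = gcd of the entries of u. Then there exist an m×m integer matrix Q and an n×m integer matrix P with aQ + uP = b if and only if there exist x, y ∈ ℤ^m with αx + μy = b. -/
open Matrix

section VecMulRange

variable {R ι κ : Type*} [CommRing R] [NormalizedGCDMonoid R] [Fintype ι]

theorem Finset.univ_gcd_dvd_vecMul (a : ι → R) (Q : Matrix ι κ R) (j : κ) :
    Finset.univ.gcd a ∣ (a ᵥ* Q) j :=
  Finset.dvd_sum fun _ hi => (Finset.gcd_dvd hi).mul_right _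

/-- Bézout coefficients `g` with `a ⬝ᵥ g = gcd(a)` give `a (g xᵀ) = gcd(a) x`. -/
theorem exists_vecMul_eq_iff_exists_gcd_smul_eq [IsBezout R] (a : ι → R) (v : κ → R) :
    (∃ Q : Matrix ι κ R, a ᵥ* Q = v) ↔ ∃ x : κ → R, Finset.univ.gcd a • x = v := by
  constructor
  · rintro ⟨Q, rfl⟩
    choose x hx using Finset.univ_gcd_dvd_vecMul a Q
    exact ⟨x, funext fun j => (hx j).symm⟩
  · rintro ⟨x, rfl⟩
    obtain ⟨g, hg⟩ := Finset.gcd_eq_sum_mul Finset.univ a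
    exact ⟨vecMulVec g x, by rw [vecMul_vecMulVec, hg, dotProduct]⟩

end VecMulRange

theorem matrix_eq_iff_gcd_system_general (m n : ℕ) (a : Fin m → ℤ) (u : Fin n → ℤ)
    (b : Fin m → ℤ) :
    (∃ (Q : Matrix (Fin m) (Fin m) ℤ) (P : Matrix (Fin n) (Fin m) ℤ),
        a ᵥ* Q + u ᵥ* P = b) ↔
    (∃ x y : Fin m → ℤ, (Finset.univ.gcd a) • x + (Finset.univ.gcd u) • y = b) := by
  constructor
  · rintro ⟨Q, P, rfl⟩
    obtain ⟨x, hx⟩ := (exists_vecMul_eq_iff_exists_gcd_smul_eq a _).1 ⟨Q, rfl⟩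
    obtain ⟨y, hy⟩ := (exists_vecMul_eq_iff_exists_gcd_smul_eq u _).1 ⟨P, rfl⟩
    exact ⟨x, y, by rw [hx, hy]⟩
  · rintro ⟨x, y, rfl⟩
    obtain ⟨Q, hQ⟩ := (exists_vecMul_eq_iff_exists_gcd_smul_eq a _).2 ⟨x, rfl⟩
    obtain ⟨P, hP⟩ := (exists_vecMul_eq_iff_exists_gcd_smul_eq u _).2 ⟨y, rfl⟩
    exact ⟨Q, P, by rw [hQ, hP]⟩

/-- For nonzero `a ∈ ℤ^m`, `u ∈ ℤ^n` and `b ∈ ℤ^m`, with `α = gcd(a)` and `μ = gcd(u)`: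
there exist integer matrices Q (m×m) and P (n×m) with `aQ + uP = b` iff the system
`αx + μy = b` has an integer solution. -/
theorem matrix_eq_iff_gcd_system (m n : ℕ) (a : Fin m → ℤ) (u : Fin n → ℤ)
    (ha : a ≠ 0) (hu : u ≠ 0) (b : Fin m → ℤ) :
    (∃ (Q : Matrix (Fin m) (Fin m) ℤ) (P : Matrix (Fin n) (Fin m) ℤ),
        a ᵥ* Q + u ᵥ* P = b) ↔
    (∃ x y : Fin m → ℤ, (Finset.univ.gcd a) • x + (Finset.univ.gcd u) • y = b) :=
  matrix_eq_iff_gcd_system_general m n a u b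
end

section
/- Let a ∈ ℤ^m and u ∈ ℤ^n be nonzero row vectors, let b ∈ ℤ^m, and set α = gcd of the entries of a and μ = gcd of the entries of u. Then there exist an m×m integer matrix Q with det(Q) ≠ 0 and an n×m integer matrix P with aQ + uP = b if and only if there exist x, y ∈ ℤ^m with x ≠ 0 and αx + μy = b. -/
/-!
Every entry of `aQ` is a multiple of `α = gcd a` and every entry of `uP` a multiple of
`μ = gcd u`, which gives `x` and `y`; `x ≠ 0` because `Q` is nonsingular and `a ≠ 0`.
Conversely, if `u ⬝ᵥ e = μ` (Bézout) then `P = e ⊗ y` gives `uP = μy`. For `Q`, pick `d` with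
`a ⬝ᵥ d = α` and `x ⬝ᵥ d ≠ 0` (a Bézout vector for `a`, corrected if necessary by a vector
orthogonal to `a`); then `Q = α • 1 + d ⊗ (x - a)` satisfies `aQ = αx` and has determinant
`α ^ (m - 1) * (x ⬝ᵥ d) ≠ 0`.
-/

open Matrix

variable {R ι κ : Type*} [CommRing R] [Fintype ι]

theorem exists_vecMul_eq_gcd_smul [NormalizedGCDMonoid R] (a : ι → R) (M : Matrix ι κ R) :
    ∃ x, a ᵥ* M = Finset.univ.gcd a • x := by
  have hdvd : ∀ j, Finset.univ.gcd a ∣ (a ᵥ* M) j := fun j =>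
    Finset.dvd_sum fun i _ => (Finset.gcd_dvd (Finset.mem_univ i)).mul_right _
  choose x hx using hdvd
  exact ⟨x, funext hx⟩

variable [IsDomain R] [DecidableEq ι]

theorem det_smul_one_add_vecMulVec_ne_zero {r : R} (hr : r ≠ 0) {d z : ι → R}
    (h : r + z ⬝ᵥ d ≠ 0) : (r • 1 + vecMulVec d z).det ≠ 0 := by
  rw [Ne, ← exists_vecMul_eq_zero_iff]
  rintro ⟨v, hv, hvM⟩
  rw [vecMul_add, vecMul_smul, vecMul_one, vecMul_vecMulVec] at hvM
  have hvd : v ⬝ᵥ d = 0 := by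
    have := congrArg (· ⬝ᵥ d) hvM
    simp only [add_dotProduct, smul_dotProduct, smul_eq_mul, zero_dotProduct] at this
    refine (mul_eq_zero.mp ?_).resolve_right h
    linear_combination this
  rw [hvd, zero_smul, add_zero, smul_eq_zero] at hvM
  exact hv (hvM.resolve_left hr)

theorem exists_dotProduct_eq_and_dotProduct_ne_zero {a x c : ι → R} (hx : x ≠ 0)
    (hac : a ⬝ᵥ c ≠ 0) : ∃ d, a ⬝ᵥ d = a ⬝ᵥ c ∧ x ⬝ᵥ d ≠ 0 := by
  obtain hxc | hxc := ne_or_eq (x ⬝ᵥ c) 0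
  · exact ⟨c, rfl, hxc⟩
  by_cases hparallel : ∀ i j, a i * x j = a j * x i
  · obtain ⟨j, hj⟩ := Function.ne_iff.mp hx
    have : x j * (a ⬝ᵥ c) = a j * (x ⬝ᵥ c) := by
      simp only [dotProduct, Finset.mul_sum]
      exact Finset.sum_congr rfl fun i _ => by linear_combination -c i * hparallel j i
    rw [hxc, mul_zero] at this
    exact absurd this (mul_ne_zero hj hac)
  push Not at hparallel
  obtain ⟨i, j, hij⟩ := hparallel
  refine ⟨c + (Pi.single j (a i) - Pi.single i (a j)), ?_, ?_⟩
  · simp only [dotProduct_add, dotProduct_sub, dotProduct_single]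
    ring
  · simp only [dotProduct_add, dotProduct_sub, dotProduct_single, hxc, zero_add]
    exact sub_ne_zero.mpr fun h => hij (by linear_combination h)

theorem exists_det_ne_zero_and_vecMul_eq_smul {a x c : ι → R} (hx : x ≠ 0)
    (hac : a ⬝ᵥ c ≠ 0) : ∃ Q : Matrix ι ι R, Q.det ≠ 0 ∧ a ᵥ* Q = (a ⬝ᵥ c) • x := by
  obtain ⟨d, had, hxd⟩ := exists_dotProduct_eq_and_dotProduct_ne_zero hx hac
  refine ⟨(a ⬝ᵥ c) • 1 + vecMulVec d (x - a), det_smul_one_add_vecMulVec_ne_zero hac ?_, ?_⟩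
  · rwa [sub_dotProduct, had, add_sub_cancel]
  · rw [vecMul_add, vecMul_smul, vecMul_one, vecMul_vecMulVec, had, smul_sub, add_sub_cancel]

theorem matrix_eq_iff_gcd_system_mono_general (m n : ℕ) (a : Fin m → ℤ) (u : Fin n → ℤ)
    (ha : a ≠ 0) (b : Fin m → ℤ) :
    (∃ (Q : Matrix (Fin m) (Fin m) ℤ) (P : Matrix (Fin n) (Fin m) ℤ),
        Q.det ≠ 0 ∧ a ᵥ* Q + u ᵥ* P = b) ↔
    (∃ x y : Fin m → ℤ, x ≠ 0 ∧ (Finset.univ.gcd a) • x + (Finset.univ.gcd u) • y = b) := by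
  constructor
  · rintro ⟨Q, P, hQ, rfl⟩
    obtain ⟨x, hx⟩ := exists_vecMul_eq_gcd_smul a Q
    obtain ⟨y, hy⟩ := exists_vecMul_eq_gcd_smul u P
    refine ⟨x, y, ?_, by rw [hx, hy]⟩
    rintro rfl
    exact ha (eq_zero_of_vecMul_eq_zero hQ (by rw [hx, smul_zero]))
  · rintro ⟨x, y, hx, rfl⟩
    obtain ⟨c, hc⟩ := Finset.univ.gcd_eq_sum_mul a
    obtain ⟨e, he⟩ := Finset.univ.gcd_eq_sum_mul u
    have hα : a ⬝ᵥ c ≠ 0 := by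
      rw [dotProduct, ← hc, Ne, Finset.gcd_eq_zero_iff]
      exact fun h => ha (funext fun i => h i (Finset.mem_univ i))
    obtain ⟨Q, hQ, hQx⟩ := exists_det_ne_zero_and_vecMul_eq_smul hx hα
    refine ⟨Q, vecMulVec e y, hQ, ?_⟩
    rw [hQx, vecMul_vecMulVec, dotProduct, dotProduct, ← hc, ← he]

/-- For nonzero `a ∈ ℤ^m`, `u ∈ ℤ^n` and `b ∈ ℤ^m`, with `α = gcd(a)` and `μ = gcd(u)`:
there exist Q (m×m) with `det Q ≠ 0` and P (n×m) with `aQ + uP = b` iff the system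
`αx + μy = b` has an integer solution with `x ≠ 0`. -/
theorem matrix_eq_iff_gcd_system_mono (m n : ℕ) (a : Fin m → ℤ) (u : Fin n → ℤ)
    (ha : a ≠ 0) (hu : u ≠ 0) (b : Fin m → ℤ) :
    (∃ (Q : Matrix (Fin m) (Fin m) ℤ) (P : Matrix (Fin n) (Fin m) ℤ),
        Q.det ≠ 0 ∧ a ᵥ* Q + u ᵥ* P = b) ↔
    (∃ x y : Fin m → ℤ, x ≠ 0 ∧ (Finset.univ.gcd a) • x + (Finset.univ.gcd u) • y = b) :=
  matrix_eq_iff_gcd_system_mono_general m n a u ha b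
end

section
/- Let m ≥ 1 and let a, b ∈ ℤ^m be row vectors. There exists an m×m integer matrix Q with det(Q) ≠ 0 and aQ = b if and only if either a = 0 and b = 0, or a ≠ 0, b ≠ 0 and gcd(a₁,…,a_m) divides bᵢ for every i = 1,…,m. -/
/-!
Necessity: a matrix with nonzero determinant over a domain is injective on row vectors, and
`gcd a` divides every entry of `a Q`. Sufficiency: write `b = g • c` with `g = gcd a` and pick `u`
with `a ⬝ᵥ u = g` (Bézout). Then `Q = g • 1 + u (c - a)ᵀ` satisfies `a Q = g • a + g • (c - a) = b`,
and the matrix determinant lemma gives `g * det Q = g ^ m * (c ⬝ᵥ u)`. So `Q` is nonsingular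
once `c ⬝ᵥ u ≠ 0`, which is arranged by replacing `u` with `(1 - a j) • u + g • e j` (`e j` the
`j`-th basis vector) for some `j` with `c j ≠ 0`.
-/

open Matrix

namespace Matrix

theorem gcd_dvd_vecMul {R m n : Type*} [CommSemiring R] [NormalizedGCDMonoid R] [Fintype m]
    (a : m → R) (Q : Matrix m n R) (j : n) : Finset.univ.gcd a ∣ (a ᵥ* Q) j :=
  Finset.dvd_sum fun i _ => (Finset.gcd_dvd (Finset.mem_univ i)).mul_right _

variable {n : Type*} [Fintype n] [DecidableEq n]

theorem det_smul_one_add_vecMulVec {K : Type*} [Field K] {r : K} (hr : r ≠ 0) (u v : n → K) :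
    (r • (1 : Matrix n n K) + vecMulVec u v).det = r ^ Fintype.card n * (1 + r⁻¹ * v ⬝ᵥ u) := by
  have hQ : r • (1 : Matrix n n K) + vecMulVec u v = r • (1 + vecMulVec (r⁻¹ • u) v) := by
    rw [smul_add, ← smul_vecMulVec, smul_smul, mul_inv_cancel₀ hr, one_smul]
  rw [hQ, det_smul, vecMulVec_eq Unit, det_one_add_replicateCol_mul_replicateRow,
    dotProduct_smul, smul_eq_mul]

variable {R : Type*} [CommRing R] [IsDomain R]

theorem mul_det_smul_one_add_vecMulVec (r : R) (u v : n → R) :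
    r * (r • (1 : Matrix n n R) + vecMulVec u v).det = r ^ Fintype.card n * (r + v ⬝ᵥ u) := by
  rcases eq_or_ne r 0 with rfl | hr
  · rcases isEmpty_or_nonempty n with _ | _ <;> simp [dotProduct]
  apply IsFractionRing.injective R (FractionRing R)
  set φ := algebraMap R (FractionRing R)
  have hφr : φ r ≠ 0 := (map_ne_zero_iff φ (IsFractionRing.injective R _)).mpr hr
  have hmap : (r • (1 : Matrix n n R) + vecMulVec u v).map φ =
      φ r • 1 + vecMulVec (φ ∘ u) (φ ∘ v) := by
    ext i j
    by_cases h : i = j <;> simp [h, vecMulVec_apply]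
  rw [map_mul, map_mul, map_pow, map_add, φ.map_det, φ.map_dotProduct, RingHom.mapMatrix_apply,
    hmap, det_smul_one_add_vecMulVec hφr]
  field_simp

theorem vecMul_ne_zero_of_det_ne_zero {Q : Matrix n n R} (hQ : Q.det ≠ 0) {a : n → R}
    (ha : a ≠ 0) : a ᵥ* Q ≠ 0 :=
  fun h => hQ (exists_vecMul_eq_zero_iff.mp ⟨a, ha, h⟩)

theorem exists_dotProduct_eq_and_dotProduct_ne_zero {a c u₀ : n → R} {r : R}
    (hu₀ : a ⬝ᵥ u₀ = r) (hr : r ≠ 0) (hc : c ≠ 0) : ∃ u, a ⬝ᵥ u = r ∧ c ⬝ᵥ u ≠ 0 := by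
  by_cases hcu₀ : c ⬝ᵥ u₀ = 0
  · obtain ⟨j, hj⟩ := Function.ne_iff.mp hc
    refine ⟨(1 - a j) • u₀ + Pi.single j r, ?_, ?_⟩
    · rw [dotProduct_add, dotProduct_smul, dotProduct_single, hu₀, smul_eq_mul]
      ring
    · rw [dotProduct_add, dotProduct_smul, dotProduct_single, hcu₀, smul_zero, zero_add]
      exact mul_ne_zero hj hr
  · exact ⟨u₀, hu₀, hcu₀⟩

theorem exists_det_ne_zero_vecMul_eq_smul {a c u : n → R} {r : R}
    (hu : a ⬝ᵥ u = r) (hr : r ≠ 0) (hcu : c ⬝ᵥ u ≠ 0) :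
    ∃ Q : Matrix n n R, Q.det ≠ 0 ∧ a ᵥ* Q = r • c := by
  refine ⟨r • 1 + vecMulVec u (c - a), fun hdet => ?_, ?_⟩
  · have hdet' := mul_det_smul_one_add_vecMulVec r u (c - a)
    rw [hdet, mul_zero, sub_dotProduct, hu, add_sub_cancel] at hdet'
    exact mul_ne_zero (pow_ne_zero _ hr) hcu hdet'.symm
  · rw [vecMul_add, vecMul_smul, vecMul_one, vecMul_vecMulVec, hu, ← smul_add, add_sub_cancel]

theorem exists_det_ne_zero_vecMul_eq_iff [IsBezout R] [NormalizedGCDMonoid R] (a b : n → R) :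
    (∃ Q : Matrix n n R, Q.det ≠ 0 ∧ a ᵥ* Q = b) ↔
      (a = 0 ∧ b = 0) ∨ (a ≠ 0 ∧ b ≠ 0 ∧ ∀ i, Finset.univ.gcd a ∣ b i) := by
  constructor
  · rintro ⟨Q, hQ, rfl⟩
    by_cases ha : a = 0
    · exact .inl ⟨ha, by rw [ha, zero_vecMul]⟩
    · exact .inr ⟨ha, vecMul_ne_zero_of_det_ne_zero hQ ha, gcd_dvd_vecMul a Q⟩
  · rintro (⟨rfl, rfl⟩ | ⟨ha, hb, hdvd⟩)
    · exact ⟨1, by simp, zero_vecMul 1⟩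
    set g := Finset.univ.gcd a
    have hg : g ≠ 0 := fun h =>
      ha (funext fun i => Finset.gcd_eq_zero_iff.mp h i (Finset.mem_univ i))
    choose c hc using hdvd
    have hbc : b = g • c := funext hc
    have hc0 : c ≠ 0 := by
      rintro rfl
      exact hb (by rw [hbc, smul_zero])
    obtain ⟨u₀, hu₀⟩ := Finset.gcd_eq_sum_mul Finset.univ a
    obtain ⟨u, hu, hcu⟩ := exists_dotProduct_eq_and_dotProduct_ne_zero hu₀.symm hg hc0
    rw [hbc]
    exact exists_det_ne_zero_vecMul_eq_smul hu hg hcu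

end Matrix

theorem nonsing_matrix_orbit_iff_general (m : ℕ) (a b : Fin m → ℤ) :
    (∃ Q : Matrix (Fin m) (Fin m) ℤ, Q.det ≠ 0 ∧ a ᵥ* Q = b) ↔
    ((a = 0 ∧ b = 0) ∨ (a ≠ 0 ∧ b ≠ 0 ∧ ∀ i, Finset.univ.gcd a ∣ b i)) :=
  exists_det_ne_zero_vecMul_eq_iff a b

/-- For `a, b ∈ ℤ^m` (m ≥ 1): there is an integer matrix Q with `det Q ≠ 0` and
`aQ = b` iff either `a = 0 ∧ b = 0`, or `a ≠ 0`, `b ≠ 0` and `gcd(a)` divides every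
entry of b. -/
theorem nonsing_matrix_orbit_iff (m : ℕ) (hm : 1 ≤ m) (a b : Fin m → ℤ) :
    (∃ Q : Matrix (Fin m) (Fin m) ℤ, Q.det ≠ 0 ∧ a ᵥ* Q = b) ↔
    ((a = 0 ∧ b = 0) ∨ (a ≠ 0 ∧ b ≠ 0 ∧ ∀ i, Finset.univ.gcd a ∣ b i)) :=
  nonsing_matrix_orbit_iff_general m a b
end
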